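/- Let p : ℝ → ℝ be a probability density function, let c be a real number, and suppose that y ↦ e^y p(y) is Lebesgue integrable with ∫_ℝ e^y p(y) dy = e^c. Define q(y) := e^{y − c} p(y) and, for ω ∈ ℝ, M(1 + iω) := ∫_ℝ e^{(1 + iω) y} p(y) dy. Assume that the function ω ↦ Re[e^{−c} M(1 + iω)/(iω)] is Lebesgue integrable on (0, ∞). Then ∫_0^∞ q(y) dy = 1/2 + (1/π) ∫_0^∞ Re[e^{−c} M(1 + iω)/(iω)] dω. -/

import Mathlib

/-!
With `q y = e^{y-c} p y`, a density of total mass one, `e^{-c} M(1 + iω)` is the Fourier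
transform `φ(ω) = ∫ e^{iωy} q(y) dy`, and `Re[φ(ω)/(iω)] = ∫ q(y) sin(ωy)/ω dy`.
Integrating over `ω ∈ (T⁻¹, T]` and swapping the integrals (legitimate because the kernel
is bounded by `T` there) gives `∫ q(y) (Si(Ty) - Si(y/T)) dy`, where `Si` is the sine
integral. As `T → ∞`, `Si(Ty) → (π/2) sign y` boundedly, so dominated convergence yields
`∫_0^∞ Re[φ(ω)/(iω)] dω = (π/2) ∫ sign(y) q(y) dy = (π/2) (2 ∫_0^∞ q - 1)`.

That `Si(x) → π/2` comes from writing `sin x / x = ∫_0^∞ e^{-xt} sin x dt` and integrating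
first in `x`: `Si(T) = ∫_0^∞ (1 - e^{-Tt} (t sin T + cos T)) / (1 + t²) dt`, whose second
part is `O(1/T)`.
-/

open MeasureTheory Real Set Filter Topology

theorem integral_exp_neg_mul_Ioi {x : ℝ} (hx : 0 < x) :
    ∫ t in Ioi 0, exp (-(x * t)) = x⁻¹ := by
  simpa [neg_mul] using integral_exp_mul_Ioi (neg_lt_zero.2 hx) 0

theorem integral_exp_neg_mul_sin (t T : ℝ) :
    ∫ x in (0 : ℝ)..T, exp (-(x * t)) * sin x
      = (1 - exp (-(T * t)) * (t * sin T + cos T)) / (1 + t ^ 2) := by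
  have hderiv (x : ℝ) :
      HasDerivAt (fun x => -(exp (-(x * t)) * (t * sin x + cos x)) / (1 + t ^ 2))
        (exp (-(x * t)) * sin x) x := by
    refine (((hasDerivAt_mul_const t).neg.exp.mul
      (((hasDerivAt_sin x).const_mul t).add (hasDerivAt_cos x))).neg.div_const
      (1 + t ^ 2)).congr_deriv ?_
    simp only [Pi.add_apply, Pi.neg_apply]
    field_simp
    ring
  rw [intervalIntegral.integral_eq_sub_of_hasDerivAt (fun x _ => hderiv x)
    ((by fun_prop : Continuous _).intervalIntegrable _ _)]
  simp only [zero_mul, neg_zero, exp_zero, sin_zero, cos_zero]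
  ring

noncomputable def sineIntegral (x : ℝ) : ℝ := ∫ t in (0 : ℝ)..x, sinc t

@[fun_prop]
theorem continuous_sineIntegral : Continuous sineIntegral :=
  intervalIntegral.continuous_primitive (fun _ _ => continuous_sinc.intervalIntegrable _ _) 0

theorem sineIntegral_neg (x : ℝ) : sineIntegral (-x) = -sineIntegral x := by
  have h := intervalIntegral.integral_comp_neg (a := 0) (b := x) sinc
  simp only [sinc_neg, neg_zero] at h
  rw [sineIntegral, sineIntegral, h, intervalIntegral.integral_symm]

theorem abs_sineIntegral_le_abs (x : ℝ) : |sineIntegral x| ≤ |x| := by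
  simpa [sineIntegral] using intervalIntegral.norm_integral_le_of_norm_le_const (a := 0) (b := x)
    (C := 1) (f := sinc) fun t _ => abs_sinc_le_one t

theorem integral_exp_neg_mul_mul_sin_Ioi {x : ℝ} (hx : 0 < x) :
    ∫ t in Ioi 0, exp (-(x * t)) * sin x = sinc x := by
  rw [integral_mul_const, integral_exp_neg_mul_Ioi hx, sinc_of_ne_zero hx.ne', inv_mul_eq_div]

theorem integrable_exp_neg_mul_mul_sin_prod (T : ℝ) :
    Integrable (fun z : ℝ × ℝ => exp (-(z.1 * z.2)) * sin z.1)
      ((volume.restrict (Ioc 0 T)).prod (volume.restrict (Ioi 0))) := by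
  have hmeas : AEStronglyMeasurable (fun z : ℝ × ℝ => exp (-(z.1 * z.2)) * sin z.1)
      ((volume.restrict (Ioc 0 T)).prod (volume.restrict (Ioi 0))) :=
    (by fun_prop : Continuous _).aestronglyMeasurable
  refine (integrable_prod_iff hmeas).2 ⟨?_, ?_⟩
  · filter_upwards [ae_restrict_mem measurableSet_Ioc] with x hx
    simpa [neg_mul] using (integrableOn_exp_mul_Ioi (neg_lt_zero.2 hx.1) 0).mul_const (sin x)
  · refine Integrable.mono' (integrableOn_const measure_Ioc_lt_top.ne (C := 1))
      hmeas.norm.integral_prod_right' ?_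
    filter_upwards [ae_restrict_mem measurableSet_Ioc] with x hx
    have habs : ∫ t in Ioi 0, ‖exp (-(x * t)) * sin x‖ = |sinc x| := by
      simp only [norm_mul, norm_eq_abs, abs_exp]
      rw [integral_mul_const, integral_exp_neg_mul_Ioi hx.1, sinc_of_ne_zero hx.1.ne', abs_div,
        abs_of_pos hx.1, inv_mul_eq_div]
    rw [norm_eq_abs, habs, abs_abs]
    exact abs_sinc_le_one x

theorem sineIntegral_eq_integral_Ioi {T : ℝ} (hT : 0 ≤ T) :
    sineIntegral T = ∫ t in Ioi 0, (1 - exp (-(T * t)) * (t * sin T + cos T)) / (1 + t ^ 2) :=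
  calc sineIntegral T = ∫ x in Ioc 0 T, ∫ t in Ioi 0, exp (-(x * t)) * sin x := by
        rw [sineIntegral, intervalIntegral.integral_of_le hT]
        exact setIntegral_congr_fun measurableSet_Ioc fun x hx =>
          (integral_exp_neg_mul_mul_sin_Ioi hx.1).symm
    _ = ∫ t in Ioi 0, ∫ x in Ioc 0 T, exp (-(x * t)) * sin x :=
        integral_integral_swap (integrable_exp_neg_mul_mul_sin_prod T)
    _ = _ := by
        congr 1 with t
        rw [← intervalIntegral.integral_of_le hT, integral_exp_neg_mul_sin]

theorem abs_mul_sin_add_cos_div_le_two (t T : ℝ) :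
    |(t * sin T + cos T) / (1 + t ^ 2)| ≤ 2 := by
  have hsum : |t * sin T + cos T| ≤ |t| + 1 :=
    calc |t * sin T + cos T| ≤ |t| * |sin T| + |cos T| := by
          simpa only [abs_mul] using abs_add_le (t * sin T) (cos T)
      _ ≤ |t| * 1 + 1 := by gcongr; exacts [abs_sin_le_one T, abs_cos_le_one T]
      _ = |t| + 1 := by ring
  rw [abs_div, abs_of_pos (by positivity : (0 : ℝ) < 1 + t ^ 2), div_le_iff₀ (by positivity)]
  nlinarith [sq_abs t, abs_nonneg t]

theorem abs_sineIntegral_sub_pi_div_two_le {T : ℝ} (hT : 0 < T) :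
    |sineIntegral T - π / 2| ≤ 2 / T := by
  set r : ℝ → ℝ := fun t => exp (-(T * t)) * ((t * sin T + cos T) / (1 + t ^ 2))
  have hbound : ∀ t, ‖r t‖ ≤ 2 * exp (-(T * t)) := fun t => by
    rw [norm_mul, norm_eq_abs, norm_eq_abs, abs_exp, mul_comm]
    exact mul_le_mul_of_nonneg_right (abs_mul_sin_add_cos_div_le_two t T) (exp_pos _).le
  have hexp : IntegrableOn (fun t => 2 * exp (-(T * t))) (Ioi 0) := by
    have h := (integrableOn_exp_mul_Ioi (neg_lt_zero.2 hT) 0).const_mul 2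
    simp only [neg_mul] at h
    exact h
  have hr : IntegrableOn r (Ioi 0) :=
    hexp.mono' (by fun_prop) (Eventually.of_forall hbound)
  have hsplit : sineIntegral T = π / 2 - ∫ t in Ioi 0, r t := by
    have hatan : ∫ t in Ioi 0, (1 + t ^ 2)⁻¹ = π / 2 := by
      simp [integral_Ioi_inv_one_add_sq]
    rw [sineIntegral_eq_integral_Ioi hT.le, ← hatan,
      ← integral_sub integrable_inv_one_add_sq.integrableOn hr]
    congr 1 with t
    simp only [r]
    field_simp
  calc |sineIntegral T - π / 2| = ‖∫ t in Ioi 0, r t‖ := by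
        rw [hsplit, sub_sub_cancel_left, abs_neg, norm_eq_abs]
    _ ≤ ∫ t in Ioi 0, 2 * exp (-(T * t)) :=
        norm_integral_le_of_norm_le hexp (Eventually.of_forall hbound)
    _ = 2 / T := by rw [integral_const_mul, integral_exp_neg_mul_Ioi hT, div_eq_mul_inv]

theorem tendsto_sineIntegral_atTop : Tendsto sineIntegral atTop (𝓝 (π / 2)) := by
  refine tendsto_sub_nhds_zero_iff.1 (squeeze_zero_norm' ?_ ?_ (a := fun T => 2 / T))
  · filter_upwards [eventually_gt_atTop 0] with T hT
    exact abs_sineIntegral_sub_pi_div_two_le hT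
  · simpa [div_eq_mul_inv] using tendsto_inv_atTop_zero.const_mul (2 : ℝ)

theorem abs_sineIntegral_le_four (x : ℝ) : |sineIntegral x| ≤ 4 := by
  wlog hx : 0 ≤ x generalizing x
  · simpa [sineIntegral_neg] using this (-x) (by linarith)
  rcases le_or_gt x 1 with hx1 | hx1
  · exact (abs_sineIntegral_le_abs x).trans (by rw [abs_of_nonneg hx]; linarith)
  · have htail := abs_sineIntegral_sub_pi_div_two_le (zero_lt_one.trans hx1)
    have h2x : 2 / x ≤ 2 := by rw [div_le_iff₀ (by linarith)]; linarith
    have hpi : |π / 2| ≤ 2 := by rw [abs_of_pos (by positivity)]; linarith [pi_le_four]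
    linarith [abs_sub_abs_le_abs_sub (sineIntegral x) (π / 2)]

theorem tendsto_sineIntegral_mul_atTop (y : ℝ) :
    Tendsto (fun T => sineIntegral (T * y)) atTop (𝓝 (π / 2 * Real.sign y)) := by
  rcases lt_trichotomy y 0 with hy | rfl | hy
  · have h := (tendsto_sineIntegral_atTop.comp
      (tendsto_id.atTop_mul_const (neg_pos.2 hy))).neg
    simpa [Function.comp_def, Real.sign_of_neg hy, ← sineIntegral_neg] using h
  · simp [sineIntegral]
  · rw [Real.sign_of_pos hy, mul_one]
    exact tendsto_sineIntegral_atTop.comp (tendsto_id.atTop_mul_const hy)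

theorem integral_sin_mul_div_Ioc (y : ℝ) {ε T : ℝ} (hε : 0 ≤ ε) (hεT : ε ≤ T) :
    ∫ ω in Ioc ε T, sin (ω * y) / ω = sineIntegral (T * y) - sineIntegral (ε * y) := by
  have hsinc : EqOn (fun ω => sin (ω * y) / ω) (fun ω => y * sinc (ω * y)) (Ioc ε T) := by
    intro ω hω
    rcases eq_or_ne y 0 with rfl | hy
    · simp
    · have hω : ω ≠ 0 := (hε.trans_lt hω.1).ne'
      simp only [sinc_of_ne_zero (mul_ne_zero hω hy)]
      field_simp
  have hint (a b : ℝ) : IntervalIntegrable sinc volume a b :=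
    continuous_sinc.intervalIntegrable a b
  rw [setIntegral_congr_fun measurableSet_Ioc hsinc, ← intervalIntegral.integral_of_le hεT,
    intervalIntegral.integral_const_mul, ← smul_eq_mul,
    intervalIntegral.smul_integral_comp_mul_right, sineIntegral, sineIntegral,
    intervalIntegral.integral_interval_sub_left (hint _ _) (hint _ _)]

theorem Complex.re_div_ofReal_mul_I (z : ℂ) (ω : ℝ) : (z / (ω * I)).re = z.im / ω := by
  rw [div_mul_eq_div_div, div_I, neg_re, mul_I_re, neg_neg, div_ofReal_im]

section

variable {q : ℝ → ℝ}

theorem integral_Ioc_integral_mul_sin_mul_div (hq : Integrable q) {ε T : ℝ} (hε : 0 < ε)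
    (hεT : ε ≤ T) :
    ∫ ω in Ioc ε T, ∫ y, q y * (sin (ω * y) / ω)
      = ∫ y, q y * (sineIntegral (T * y) - sineIntegral (ε * y)) := by
  set μ := volume.restrict (Ioc ε T)
  have hmeas : AEStronglyMeasurable (fun z : ℝ × ℝ => q z.2 * (sin (z.1 * z.2) / z.1))
      (μ.prod volume) :=
    hq.aestronglyMeasurable.comp_snd.mul
      (by fun_prop : Measurable fun z : ℝ × ℝ => sin (z.1 * z.2) / z.1).aestronglyMeasurable
  have hdom : Integrable (fun z : ℝ × ℝ => ε⁻¹ * |q z.2|) (μ.prod volume) :=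
    (integrable_const ε⁻¹).mul_prod hq.abs
  have hbound :
      ∀ᵐ z ∂(μ.prod volume), ‖q z.2 * (sin (z.1 * z.2) / z.1)‖ ≤ ε⁻¹ * |q z.2| := by
    filter_upwards
      [Measure.quasiMeasurePreserving_fst.ae (ae_restrict_mem measurableSet_Ioc)] with z hz
    have hz0 : 0 < z.1 := hε.trans hz.1
    have hkernel : |sin (z.1 * z.2) / z.1| ≤ ε⁻¹ := by
      rw [abs_div, abs_of_pos hz0, div_le_iff₀ hz0]
      calc |sin (z.1 * z.2)| ≤ 1 := abs_sin_le_one _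
        _ ≤ ε⁻¹ * z.1 := by rw [← div_eq_inv_mul, one_le_div hε]; exact hz.1.le
    rw [norm_mul, norm_eq_abs, norm_eq_abs, mul_comm]
    exact mul_le_mul_of_nonneg_right hkernel (abs_nonneg _)
  rw [integral_integral_swap (f := fun ω y => q y * (sin (ω * y) / ω))
    (hdom.mono' hmeas hbound)]
  congr 1 with y
  rw [integral_const_mul, integral_sin_mul_div_Ioc y hε.le hεT]

theorem integral_Ioi_integral_mul_sin_mul_div (hq : Integrable q)
    (hI : IntegrableOn (fun ω => ∫ y, q y * (sin (ω * y) / ω)) (Ioi 0)) :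
    ∫ ω in Ioi 0, ∫ y, q y * (sin (ω * y) / ω) = π / 2 * ∫ y, Real.sign y * q y := by
  set G : ℝ → ℝ := fun ω => ∫ y, q y * (sin (ω * y) / ω)
  have hcover : AECover (volume.restrict (Ioi 0)) atTop fun T : ℝ => Ioc T⁻¹ T :=
    (aecover_Ioi_of_Ioi tendsto_inv_atTop_zero).inter (aecover_Iic tendsto_id)
  have htrunc : ∀ᶠ T in atTop,
      ∫ ω in Ioc T⁻¹ T, G ω ∂volume.restrict (Ioi 0)
        = ∫ y, q y * (sineIntegral (T * y) - sineIntegral (T⁻¹ * y)) := by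
    filter_upwards [eventually_ge_atTop 1] with T hT
    have hT0 : 0 < T := zero_lt_one.trans_le hT
    rw [Measure.restrict_restrict measurableSet_Ioc, inter_eq_left.2
      (Ioc_subset_Ioi_self.trans (Ioi_subset_Ioi (inv_pos.2 hT0).le))]
    exact integral_Ioc_integral_mul_sin_mul_div hq (inv_pos.2 hT0)
      ((inv_le_one_of_one_le₀ hT).trans hT)
  have hlimit :
      Tendsto (fun T : ℝ => ∫ y, q y * (sineIntegral (T * y) - sineIntegral (T⁻¹ * y))) atTop
        (𝓝 (∫ y, q y * (π / 2 * Real.sign y))) := by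
    refine tendsto_integral_filter_of_dominated_convergence (fun y => |q y| * 8)
      (Eventually.of_forall fun T => hq.aestronglyMeasurable.mul (by fun_prop))
      (Eventually.of_forall fun T => Eventually.of_forall fun y => ?_) (hq.abs.mul_const 8)
      (ae_of_all _ fun y => ?_)
    · rw [norm_mul, norm_eq_abs, norm_eq_abs]
      gcongr
      linarith [abs_sub (sineIntegral (T * y)) (sineIntegral (T⁻¹ * y)),
        abs_sineIntegral_le_four (T * y), abs_sineIntegral_le_four (T⁻¹ * y)]
    · have hzero : Tendsto (fun T : ℝ => sineIntegral (T⁻¹ * y)) atTop (𝓝 0) := by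
        have h := ((continuous_sineIntegral.comp (continuous_mul_const y)).tendsto 0).comp
          tendsto_inv_atTop_zero
        rwa [Function.comp_apply, zero_mul, sineIntegral, intervalIntegral.integral_same] at h
      simpa using ((tendsto_sineIntegral_mul_atTop y).sub hzero).const_mul (q y)
  rw [tendsto_nhds_unique ((hcover.integral_tendsto_of_countably_generated hI).congr' htrunc)
    hlimit, ← integral_const_mul]
  congr 1 with y
  ring

theorem im_integral_exp_mul_I_mul (hq : Integrable q) (ω : ℝ) :
    (∫ y, Complex.exp ((ω * y : ℝ) * Complex.I) * q y).im = ∫ y, sin (ω * y) * q y := by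
  have hint : Integrable fun y => Complex.exp ((ω * y : ℝ) * Complex.I) * q y :=
    hq.ofReal.bdd_mul (by fun_prop) (ae_of_all _ fun y => (Complex.norm_exp_ofReal_mul_I _).le)
  rw [← RCLike.im_to_complex, ← integral_im hint]
  congr 1 with y
  rw [RCLike.im_to_complex, Complex.im_mul_ofReal, Complex.exp_ofReal_mul_I_im]

theorem integral_Ioi_re_integral_exp_mul_I_div (hq : Integrable q)
    (hI : IntegrableOn (fun ω : ℝ =>
      ((∫ y, Complex.exp ((ω * y : ℝ) * Complex.I) * q y) / (ω * Complex.I)).re) (Ioi 0)) :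
    ∫ ω in Ioi 0, ((∫ y, Complex.exp ((ω * y : ℝ) * Complex.I) * q y) / (ω * Complex.I)).re
      = π / 2 * ∫ y, Real.sign y * q y := by
  have hre (ω : ℝ) :
      ((∫ y, Complex.exp ((ω * y : ℝ) * Complex.I) * q y) / (ω * Complex.I)).re
        = ∫ y, q y * (sin (ω * y) / ω) := by
    rw [Complex.re_div_ofReal_mul_I, im_integral_exp_mul_I_mul hq, ← integral_div]
    congr 1 with y
    ring
  simp_rw [hre] at hI ⊢
  exact integral_Ioi_integral_mul_sin_mul_div hq hI

theorem integral_sign_mul (hq : Integrable q) :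
    ∫ y, Real.sign y * q y = 2 * (∫ y in Ioi 0, q y) - ∫ y, q y := by
  have hsplit (y : ℝ) : Real.sign y * q y = (Ioi 0).indicator q y - (Iio 0).indicator q y := by
    rcases lt_trichotomy y 0 with hy | rfl | hy
    · simp [hy, hy.not_gt, Real.sign_of_neg]
    · simp
    · simp [hy, hy.not_gt, Real.sign_of_pos]
  have hIio : ∫ y in Iio 0, q y = (∫ y, q y) - ∫ y in Ioi 0, q y := by
    rw [← integral_Iic_eq_integral_Iio, ← compl_Ioi]
    linarith [integral_add_compl (measurableSet_Ioi (a := (0 : ℝ))) hq]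
  simp_rw [hsplit]
  rw [integral_sub (hq.indicator measurableSet_Ioi) (hq.indicator measurableSet_Iio),
    integral_indicator measurableSet_Ioi, integral_indicator measurableSet_Iio, hIio]
  ring

end

theorem tilted_density_positive_mass_general (p : ℝ → ℝ) (c : ℝ)
    (hexp : Integrable (fun y : ℝ => Real.exp y * p y))
    (hexpval : ∫ y : ℝ, Real.exp y * p y = Real.exp c)
    (M : ℝ → ℂ)
    (hM : ∀ ω : ℝ, M ω = ∫ y : ℝ, Complex.exp ((1 + ω * Complex.I) * y) * (p y : ℂ))
    (hI : IntegrableOn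
      (fun ω : ℝ => (Complex.exp (-(c : ℂ)) * M ω / (ω * Complex.I)).re) (Set.Ioi 0)) :
    ∫ y in Set.Ioi (0 : ℝ), Real.exp (y - c) * p y
      = 1 / 2 + (1 / π) *
          ∫ ω in Set.Ioi (0 : ℝ), (Complex.exp (-(c : ℂ)) * M ω / (ω * Complex.I)).re := by
  have htilt (y : ℝ) : exp (y - c) * p y = exp (-c) * (exp y * p y) := by
    rw [sub_eq_neg_add, exp_add, mul_assoc]
  have hq : Integrable fun y => exp (y - c) * p y := by
    simpa only [htilt] using hexp.const_mul (exp (-c))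
  have hmass : ∫ y, exp (y - c) * p y = 1 := by
    simp_rw [htilt]
    rw [integral_const_mul, hexpval, ← exp_add, neg_add_cancel, exp_zero]
  have hchar (ω : ℝ) : Complex.exp (-(c : ℂ)) * M ω
      = ∫ y, Complex.exp ((ω * y : ℝ) * Complex.I) * (exp (y - c) * p y : ℝ) := by
    rw [hM ω, ← integral_const_mul]
    congr 1 with y
    push_cast
    rw [← mul_assoc, ← mul_assoc, ← Complex.exp_add, ← Complex.exp_add]
    ring_nf
  simp_rw [hchar] at hI ⊢
  rw [integral_Ioi_re_integral_exp_mul_I_div hq hI, integral_sign_mul hq, hmass]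
  field_simp
  ring

/-- Lemma 3.2: the tilted density `q(y) = e^{y-c} p(y)` has mass on `(0,∞)` given by
`1/2 + (1/π) ∫_0^∞ Re[e^{-c} M(1+iω)/(iω)] dω`, where `M(1+iω) = ∫ e^{(1+iω)y} p(y) dy`. -/
theorem tilted_density_positive_mass (p : ℝ → ℝ) (c : ℝ)
    (hmeas : Measurable p) (hpos : ∀ᵐ y : ℝ, 0 ≤ p y)
    (hint : Integrable p) (hnorm : ∫ y : ℝ, p y = 1)
    (hexp : Integrable (fun y : ℝ => Real.exp y * p y))
    (hexpval : ∫ y : ℝ, Real.exp y * p y = Real.exp c)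
    (M : ℝ → ℂ)
    (hM : ∀ ω : ℝ, M ω = ∫ y : ℝ, Complex.exp ((1 + ω * Complex.I) * y) * (p y : ℂ))
    (hI : IntegrableOn
      (fun ω : ℝ => (Complex.exp (-(c : ℂ)) * M ω / (ω * Complex.I)).re) (Set.Ioi 0)) :
    ∫ y in Set.Ioi (0 : ℝ), Real.exp (y - c) * p y
      = 1 / 2 + (1 / π) *
          ∫ ω in Set.Ioi (0 : ℝ), (Complex.exp (-(c : ℂ)) * M ω / (ω * Complex.I)).re :=
  tilted_density_positive_mass_general p c hexp hexpval M hM hI
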